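/- Let R be a unique factorization domain and let a, b, c ∈ R with a ≠ 0 and such that every common divisor of a, b, and c is a unit. Then the polynomial a·x² + b·x + c factors into two linear factors in R[x] if and only if the monic polynomial x² + b·x + a·c factors into two monic linear factors, i.e., there exist b₁, b₂ ∈ R with x² + b·x + a·c = (x + b₁)·(x + b₂) in R[x]. -/

import Mathlib

/-!
A factorization `(A x + B)(C x + D)` gives `x² + b x + a c = (x + A D)(x + B C)`. Conversely, if
`b₁ b₂ = a c` then `a ∣ b₁ b₂`, and in a UFD (a decomposition monoid) `a = a₁ a₂` with `a₁ ∣ b₁`,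
`a₂ ∣ b₂`; cancelling `a` splits `c = c₁ c₂` accordingly, and `a x² + b x + c = (a₁ x + c₂)(a₂ x + c₁)`.
-/

open Polynomial

theorem exists_factors_of_mul_eq_mul {α : Type*} [CommMonoidWithZero α] [IsLeftCancelMulZero α]
    [DecompositionMonoid α] {a c b₁ b₂ : α} (ha : a ≠ 0) (h : a * c = b₁ * b₂) :
    ∃ a₁ a₂ c₁ c₂, a = a₁ * a₂ ∧ c = c₁ * c₂ ∧ b₁ = a₁ * c₁ ∧ b₂ = a₂ * c₂ := by
  obtain ⟨a₁, a₂, ⟨c₁, rfl⟩, ⟨c₂, rfl⟩, rfl⟩ := exists_dvd_and_dvd_of_dvd_mul (Dvd.intro c h)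
  refine ⟨a₁, a₂, c₁, c₂, rfl, mul_left_cancel₀ ha ?_, rfl, rfl⟩
  rw [h, mul_mul_mul_comm]

namespace Polynomial

variable {R : Type*}

theorem C_mul_X_sq_add_C_mul_X_add_C_inj [Semiring R] {a b c a' b' c' : R} :
    C a * X ^ 2 + C b * X + C c = C a' * X ^ 2 + C b' * X + C c' ↔ a = a' ∧ b = b' ∧ c = c' := by
  refine ⟨fun h => ⟨?_, ?_, ?_⟩, by rintro ⟨rfl, rfl, rfl⟩; rfl⟩
  · simpa using congrArg (coeff · 2) h
  · simpa using congrArg (coeff · 1) h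
  · simpa using congrArg (coeff · 0) h

theorem X_sq_add_C_mul_X_add_C_inj [Semiring R] {b c b' c' : R} :
    X ^ 2 + C b * X + C c = X ^ 2 + C b' * X + C c' ↔ b = b' ∧ c = c' := by
  simpa using C_mul_X_sq_add_C_mul_X_add_C_inj (a := (1 : R)) (a' := 1) (b := b) (b' := b')
    (c := c) (c' := c')

theorem C_mul_X_add_C_mul_C_mul_X_add_C [CommSemiring R] (A B C' D : R) :
    (C A * X + C B) * (C C' * X + C D) =
      C (A * C') * X ^ 2 + C (A * D + B * C') * X + C (B * D) := by
  simp only [map_mul, map_add]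
  ring

theorem X_add_C_mul_X_add_C [CommSemiring R] (b₁ b₂ : R) :
    (X + C b₁) * (X + C b₂) = X ^ 2 + C (b₁ + b₂) * X + C (b₁ * b₂) := by
  simp only [map_mul, map_add]
  ring

end Polynomial

theorem quadratic_factors_iff_monic_factors_general
    {R : Type*} [CommRing R] [UniqueFactorizationMonoid R]
    (a b c : R) (ha : a ≠ 0) :
    (∃ A B C D : R,
      Polynomial.C a * Polynomial.X ^ 2 + Polynomial.C b * Polynomial.X + Polynomial.C c
        = (Polynomial.C A * Polynomial.X + Polynomial.C B) *
          (Polynomial.C C * Polynomial.X + Polynomial.C D)) ↔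
    (∃ b₁ b₂ : R,
      Polynomial.X ^ 2 + Polynomial.C b * Polynomial.X + Polynomial.C (a * c)
        = (Polynomial.X + Polynomial.C b₁) * (Polynomial.X + Polynomial.C b₂)) := by
  simp only [C_mul_X_add_C_mul_C_mul_X_add_C, X_add_C_mul_X_add_C,
    C_mul_X_sq_add_C_mul_X_add_C_inj, X_sq_add_C_mul_X_add_C_inj]
  constructor
  · rintro ⟨A, B, C, D, rfl, rfl, rfl⟩
    exact ⟨A * D, B * C, rfl, by ring⟩
  · rintro ⟨b₁, b₂, rfl, hac⟩
    obtain ⟨a₁, a₂, c₁, c₂, rfl, rfl, rfl, rfl⟩ := exists_factors_of_mul_eq_mul ha hac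
    exact ⟨a₁, c₂, a₂, c₁, rfl, by ring, by ring⟩

theorem quadratic_factors_iff_monic_factors
    {R : Type*} [CommRing R] [IsDomain R] [UniqueFactorizationMonoid R]
    (a b c : R) (ha : a ≠ 0)
    (hcop : ∀ d : R, d ∣ a → d ∣ b → d ∣ c → IsUnit d) :
    (∃ A B C D : R,
      Polynomial.C a * Polynomial.X ^ 2 + Polynomial.C b * Polynomial.X + Polynomial.C c
        = (Polynomial.C A * Polynomial.X + Polynomial.C B) *
          (Polynomial.C C * Polynomial.X + Polynomial.C D)) ↔
    (∃ b₁ b₂ : R,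
      Polynomial.X ^ 2 + Polynomial.C b * Polynomial.X + Polynomial.C (a * c)
        = (Polynomial.X + Polynomial.C b₁) * (Polynomial.X + Polynomial.C b₂)) :=
  quadratic_factors_iff_monic_factors_general a b c ha
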